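/- Let W, H > 0, K ∈ ℕ, real coefficients a_{up} (0 ≤ u, p ≤ K) with a_{00} = 0, and ψ(z,v) = Σ_{u=0}^{K} Σ_{p=0}^{K} a_{up} cos(uπz/W) cos(pπv/H). Fix x_i ∈ ℝ, w_i > 0, A_i > 0 and h_i = A_i/w_i, and define g(y) = ∬_{[x_i − w_i/2, x_i + w_i/2] × [y − h_i/2, y + h_i/2]} ψ(z,v) dz dv. Then g is differentiable in y with derivative g′(y_i) = Σ_{u=1}^{K} Σ_{p=1}^{K} a_{up} (W/(uπ)) [sin(uπ(x_i + w_i/2)/W) − sin(uπ(x_i − w_i/2)/W)] [cos(pπ(y_i + h_i/2)/H) − cos(pπ(y_i − h_i/2)/H)] + Σ_{p=1}^{K} a_{0p} w_i [cos(pπ(y_i + h_i/2)/H) − cos(pπ(y_i − h_i/2)/H)]. -/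

import Mathlib

/-!
Since ψ is a finite sum of products `cos (uπz/W) * cos (pπv/H)`, the energy is the finite sum
of `a u p * (∫ cos (uπz/W) dz) * (∫_{y-h/2}^{y+h/2} cos (pπv/H) dv)`. By the fundamental theorem
of calculus the second factor has derivative `cos (pπ(y+h/2)/H) - cos (pπ(y-h/2)/H)`, which
vanishes for `p = 0`; the first factor equals `w_i` for `u = 0` and is an explicit difference of
sines otherwise.
-/

open MeasureTheory Real

theorem Continuous.hasDerivAt_intervalIntegral {E : Type*} [NormedAddCommGroup E]
    [NormedSpace ℝ E] [CompleteSpace E] {f : ℝ → E} (hf : Continuous f) {l r : ℝ → ℝ}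
    {l' r' y : ℝ} (hl : HasDerivAt l l' y) (hr : HasDerivAt r r' y) :
    HasDerivAt (fun t => ∫ x in l t..r t, f x) (r' • f (r y) - l' • f (l y)) y := by
  have hsplit : (fun t => ∫ x in l t..r t, f x)
      = fun t => (∫ x in (0 : ℝ)..r t, f x) - ∫ x in (0 : ℝ)..l t, f x := by
    funext t
    rw [intervalIntegral.integral_interval_sub_left (hf.intervalIntegrable _ _)
      (hf.intervalIntegrable _ _)]
  rw [hsplit]
  exact ((hf.integral_hasStrictDerivAt 0 (r y)).hasDerivAt.scomp y hr).sub
    ((hf.integral_hasStrictDerivAt 0 (l y)).hasDerivAt.scomp y hl)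

theorem integral_cos_mul_div (a b : ℝ) {c d : ℝ} (hc : c ≠ 0) (hd : d ≠ 0) :
    ∫ x in a..b, cos (c * x / d) = d / c * (sin (c * b / d) - sin (c * a / d)) := by
  simp_rw [mul_div_right_comm c _ d]
  rw [intervalIntegral.integral_comp_mul_left cos (div_ne_zero hc hd), integral_cos,
    smul_eq_mul, inv_div]

theorem IntervalIntegrable.fun_finsetSum {ι : Type*} (s : Finset ι) {f : ι → ℝ → ℝ} {a b : ℝ}
    (h : ∀ i ∈ s, IntervalIntegrable (f i) volume a b) :
    IntervalIntegrable (fun x => ∑ i ∈ s, f i x) volume a b := by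
  simpa only [← Finset.sum_apply] using IntervalIntegrable.sum s h

theorem intervalIntegral_integral_sum_sum_mul {ι κ : Type*} (s : Finset ι) (t : Finset κ)
    (c : ι → κ → ℝ) {f : ι → ℝ → ℝ} {g : κ → ℝ → ℝ} {a b a' b' : ℝ}
    (hf : ∀ i, IntervalIntegrable (f i) volume a b)
    (hg : ∀ j, IntervalIntegrable (g j) volume a' b') :
    ∫ z in a..b, ∫ v in a'..b', ∑ i ∈ s, ∑ j ∈ t, c i j * f i z * g j v
      = ∑ i ∈ s, ∑ j ∈ t, c i j * (∫ z in a..b, f i z) * ∫ v in a'..b', g j v := by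
  have hinner : ∀ z, ∫ v in a'..b', ∑ i ∈ s, ∑ j ∈ t, c i j * f i z * g j v
      = ∑ i ∈ s, ∑ j ∈ t, c i j * (∫ v in a'..b', g j v) * f i z := by
    intro z
    rw [intervalIntegral.integral_finsetSum fun i _ =>
      IntervalIntegrable.fun_finsetSum t fun j _ => (hg j).const_mul _]
    refine Finset.sum_congr rfl fun i _ => ?_
    rw [intervalIntegral.integral_finsetSum fun j _ => (hg j).const_mul _]
    refine Finset.sum_congr rfl fun j _ => ?_
    rw [intervalIntegral.integral_const_mul]
    ring
  simp_rw [hinner]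
  rw [intervalIntegral.integral_finsetSum fun i _ =>
    IntervalIntegrable.fun_finsetSum t fun j _ => (hf i).const_mul _]
  refine Finset.sum_congr rfl fun i _ => ?_
  rw [intervalIntegral.integral_finsetSum fun j _ => (hf i).const_mul _]
  refine Finset.sum_congr rfl fun j _ => ?_
  rw [intervalIntegral.integral_const_mul]
  ring

theorem Finset.sum_range_succ_eq_add_sum_Icc {M : Type*} [AddCommMonoid M] (f : ℕ → M)
    (n : ℕ) : ∑ i ∈ Finset.range (n + 1), f i = f 0 + ∑ i ∈ Finset.Icc 1 n, f i := by
  rw [Finset.range_eq_Ico, Finset.sum_eq_sum_Ico_succ_bot n.succ_pos, Nat.succ_eq_add_one,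
    zero_add, Finset.Ico_add_one_right_eq_Icc]

theorem hasDerivAt_potential_energy_y_general
    (W H : ℝ) (hW : 0 < W) (K : ℕ) (a : ℕ → ℕ → ℝ)
    (xi wi Ai : ℝ) (yi : ℝ) :
    HasDerivAt
      (fun y : ℝ =>
        ∫ z in (xi - wi / 2)..(xi + wi / 2), ∫ v in (y - (Ai / wi) / 2)..(y + (Ai / wi) / 2),
          ∑ u ∈ Finset.range (K + 1), ∑ p ∈ Finset.range (K + 1),
            a u p * Real.cos ((u : ℝ) * π * z / W) * Real.cos ((p : ℝ) * π * v / H))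
      ((∑ u ∈ Finset.Icc 1 K, ∑ p ∈ Finset.Icc 1 K,
          a u p * (W / ((u : ℝ) * π)) *
            (Real.sin ((u : ℝ) * π * (xi + wi / 2) / W) -
              Real.sin ((u : ℝ) * π * (xi - wi / 2) / W)) *
            (Real.cos ((p : ℝ) * π * (yi + (Ai / wi) / 2) / H) -
              Real.cos ((p : ℝ) * π * (yi - (Ai / wi) / 2) / H)))
        + (∑ p ∈ Finset.Icc 1 K,
            a 0 p * wi *
              (Real.cos ((p : ℝ) * π * (yi + (Ai / wi) / 2) / H) -
                Real.cos ((p : ℝ) * π * (yi - (Ai / wi) / 2) / H))))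
      yi := by
  set h := Ai / wi
  have hcos : ∀ k : ℕ, ∀ L, Continuous fun x : ℝ => cos ((k : ℝ) * π * x / L) :=
    fun k L => by fun_prop
  have hinner_deriv : ∀ p : ℕ, HasDerivAt (fun y => ∫ v in (y - h / 2)..(y + h / 2),
      cos ((p : ℝ) * π * v / H))
      (cos ((p : ℝ) * π * (yi + h / 2) / H) - cos ((p : ℝ) * π * (yi - h / 2) / H)) yi := by
    intro p
    simpa using (hcos p H).hasDerivAt_intervalIntegral ((hasDerivAt_id yi).sub_const (h / 2))
      ((hasDerivAt_id yi).add_const (h / 2))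
  have hsum := HasDerivAt.fun_sum fun u (_ : u ∈ Finset.range (K + 1)) =>
    HasDerivAt.fun_sum fun p (_ : p ∈ Finset.range (K + 1)) =>
      (hinner_deriv p).const_mul (a u p * ∫ z in (xi - wi / 2)..(xi + wi / 2), cos ((u : ℝ) * π * z / W))
  refine (hsum.congr_deriv ?_).congr_of_eventuallyEq (Filter.Eventually.of_forall fun y => ?_)
  · simp only [Finset.sum_range_succ_eq_add_sum_Icc, Nat.cast_zero, zero_mul, zero_div, cos_zero,
      sub_self, mul_zero, zero_add, intervalIntegral.integral_const, smul_eq_mul]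
    rw [add_comm]
    congr 1
    · refine Finset.sum_congr rfl fun u hu => Finset.sum_congr rfl fun p _ => ?_
      have hu0 : (u : ℝ) * π ≠ 0 :=
        mul_ne_zero (Nat.cast_ne_zero.mpr (Nat.one_le_iff_ne_zero.mp (Finset.mem_Icc.mp hu).1))
          pi_ne_zero
      rw [integral_cos_mul_div _ _ hu0 hW.ne']
      ring
    · exact Finset.sum_congr rfl fun p _ => by ring
  · exact intervalIntegral_integral_sum_sum_mul _ _ a (fun u => (hcos u W).intervalIntegrable _ _)
      (fun p => (hcos p H).intervalIntegrable _ _)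

/-- the potential energy is differentiable in the ordinate `y_i` of the
module's center, with the stated closed-form derivative. -/
theorem hasDerivAt_potential_energy_y
    (W H : ℝ) (hW : 0 < W) (hH : 0 < H) (K : ℕ) (a : ℕ → ℕ → ℝ) (ha00 : a 0 0 = 0)
    (xi wi Ai : ℝ) (hwi : 0 < wi) (hAi : 0 < Ai) (yi : ℝ) :
    HasDerivAt
      (fun y : ℝ =>
        ∫ z in (xi - wi / 2)..(xi + wi / 2), ∫ v in (y - (Ai / wi) / 2)..(y + (Ai / wi) / 2),
          ∑ u ∈ Finset.range (K + 1), ∑ p ∈ Finset.range (K + 1),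
            a u p * Real.cos ((u : ℝ) * π * z / W) * Real.cos ((p : ℝ) * π * v / H))
      ((∑ u ∈ Finset.Icc 1 K, ∑ p ∈ Finset.Icc 1 K,
          a u p * (W / ((u : ℝ) * π)) *
            (Real.sin ((u : ℝ) * π * (xi + wi / 2) / W) -
              Real.sin ((u : ℝ) * π * (xi - wi / 2) / W)) *
            (Real.cos ((p : ℝ) * π * (yi + (Ai / wi) / 2) / H) -
              Real.cos ((p : ℝ) * π * (yi - (Ai / wi) / 2) / H)))
        + (∑ p ∈ Finset.Icc 1 K,
            a 0 p * wi *
              (Real.cos ((p : ℝ) * π * (yi + (Ai / wi) / 2) / H) -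
                Real.cos ((p : ℝ) * π * (yi - (Ai / wi) / 2) / H))))
      yi :=
  hasDerivAt_potential_energy_y_general W H hW K a xi wi Ai yi
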